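/- arXiv:2407.13413 — 2 statements merged into one kernel-verified Lean document; each statement's English description precedes it below -/
import Mathlib

section
/- Let m_v, m_w be positive integers and m_e = gcd(m_v, m_w). Let β_v, β_w ∈ [0,1) be real numbers and c ∈ [0,1). Then the following are equivalent: (1) there exist γ ∈ [0,1) and an integer s_e with 0 ≤ s_e < m_e such that the fractional part of m_v·γ/m_e equals β_v, the fractional part of m_w·γ/m_e equals β_w, and (γ + s_e)/m_e = c; (2) there exist integers s_v, s_w with 0 ≤ s_v < m_v and 0 ≤ s_w < m_w such that (β_v + s_v)/m_v = c and (β_w + s_w)/m_w = c. -/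
lemma aux_frac (m : ℕ) (hm : 0 < m) (β c : ℝ) (hβ : β ∈ Set.Ico (0:ℝ) 1)
    (hc : c ∈ Set.Ico (0:ℝ) 1) :
    (∃ s : ℤ, 0 ≤ s ∧ s < (m:ℤ) ∧ (β + s)/(m:ℝ) = c) ↔ Int.fract ((m:ℝ) * c) = β := by
  have hm' : (m:ℝ) ≠ 0 := Nat.cast_ne_zero.2 hm.ne'
  have hm0 : (0:ℝ) < m := Nat.cast_pos.2 hm
  constructor
  · rintro ⟨s, hs0, hsm, hsc⟩
    have h : (m:ℝ) * c = β + s := by field_simp at hsc; linarith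
    rw [h, Int.fract_add_intCast, Int.fract_eq_self.2 ⟨hβ.1, hβ.2⟩]
  · intro h
    refine ⟨⌊(m:ℝ)*c⌋, Int.floor_nonneg.2 (mul_nonneg (Nat.cast_nonneg m) hc.1), ?_, ?_⟩
    · exact Int.floor_lt.2 (by push_cast; nlinarith [hc.2])
    · have : β + (⌊(m:ℝ)*c⌋ : ℝ) = (m:ℝ)*c := by
        rw [← h]; unfold Int.fract; ring
      rw [this]; field_simp
lemma aux_shift (g k : ℕ) (hg : 0 < g) (c : ℝ) (t : ℤ) :
    Int.fract (((g*k : ℕ):ℝ) * ((g:ℝ)*c - t) / (g:ℝ)) = Int.fract (((g*k:ℕ):ℝ) * c) := by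
  have hg' : (g:ℝ) ≠ 0 := Nat.cast_ne_zero.2 hg.ne'
  have h : ((g*k:ℕ):ℝ) * ((g:ℝ)*c - t) / (g:ℝ) = ((g*k:ℕ):ℝ)*c - ((k*t : ℤ):ℝ) := by
    push_cast; field_simp
  rw [h, Int.fract_sub_intCast]

theorem stmt_0 (mv mw : ℕ) (hv : 0 < mv) (hw : 0 < mw)
    (βv βw c : ℝ) (hβv : βv ∈ Set.Ico (0:ℝ) 1) (hβw : βw ∈ Set.Ico (0:ℝ) 1)
    (hc : c ∈ Set.Ico (0:ℝ) 1) :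
    (∃ γ ∈ Set.Ico (0:ℝ) 1, ∃ se : ℤ, 0 ≤ se ∧ se < (Nat.gcd mv mw : ℤ) ∧
      Int.fract ((mv : ℝ) * γ / (Nat.gcd mv mw : ℝ)) = βv ∧
      Int.fract ((mw : ℝ) * γ / (Nat.gcd mv mw : ℝ)) = βw ∧
      (γ + se) / (Nat.gcd mv mw : ℝ) = c) ↔
    (∃ sv sw : ℤ, 0 ≤ sv ∧ sv < (mv : ℤ) ∧ 0 ≤ sw ∧ sw < (mw : ℤ) ∧
      (βv + sv) / (mv : ℝ) = c ∧ (βw + sw) / (mw : ℝ) = c) := by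
  set g := Nat.gcd mv mw with hgdef
  have hg : 0 < g := Nat.gcd_pos_of_pos_left _ hv
  have hg' : (g:ℝ) ≠ 0 := Nat.cast_ne_zero.2 hg.ne'
  have hg0 : (0:ℝ) < g := Nat.cast_pos.2 hg
  obtain ⟨kv, hkv⟩ : g ∣ mv := Nat.gcd_dvd_left mv mw
  obtain ⟨kw, hkw⟩ : g ∣ mw := Nat.gcd_dvd_right mv mw
  constructor
  · rintro ⟨γ, hγ, se, hse0, hseg, hfv, hfw, hsec⟩
    have hγeq : γ = (g:ℝ)*c - se := by field_simp at hsec; linarith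
    have hv' : Int.fract ((mv:ℝ) * c) = βv := by
      rw [← hfv, hγeq, hkv, aux_shift g kv hg c se]
    have hw' : Int.fract ((mw:ℝ) * c) = βw := by
      rw [← hfw, hγeq, hkw, aux_shift g kw hg c se]
    obtain ⟨sv, h1, h2, h3⟩ := (aux_frac mv hv βv c hβv hc).2 hv'
    obtain ⟨sw, h4, h5, h6⟩ := (aux_frac mw hw βw c hβw hc).2 hw'
    exact ⟨sv, sw, h1, h2, h4, h5, h3, h6⟩
  · rintro ⟨sv, sw, h1, h2, h4, h5, h3, h6⟩
    have hv' : Int.fract ((mv:ℝ) * c) = βv :=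
      (aux_frac mv hv βv c hβv hc).1 ⟨sv, h1, h2, h3⟩
    have hw' : Int.fract ((mw:ℝ) * c) = βw :=
      (aux_frac mw hw βw c hβw hc).1 ⟨sw, h4, h5, h6⟩
    refine ⟨Int.fract ((g:ℝ)*c), ⟨Int.fract_nonneg _, Int.fract_lt_one _⟩,
      ⌊(g:ℝ)*c⌋, Int.floor_nonneg.2 (mul_nonneg (Nat.cast_nonneg g) hc.1), ?_, ?_, ?_, ?_⟩
    · exact Int.floor_lt.2 (by push_cast; nlinarith [hc.2])
    · have : Int.fract ((g:ℝ)*c) = (g:ℝ)*c - ⌊(g:ℝ)*c⌋ := rfl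
      rw [this, ← hv', hkv, aux_shift g kv hg c ⌊(g:ℝ)*c⌋]
    · have : Int.fract ((g:ℝ)*c) = (g:ℝ)*c - ⌊(g:ℝ)*c⌋ := rfl
      rw [this, ← hw', hkw, aux_shift g kw hg c ⌊(g:ℝ)*c⌋]
    · rw [Int.fract_add_floor]; field_simp
end

section
/- Let L be the free ℤ-module with basis {E_i}_{i∈V}, V finite, equipped with a negative definite symmetric bilinear form (·,·) over ℚ such that (E_i, E_j) ≥ 0 for all i ≠ j, and assume the graph on V with edges {i,j} whenever (E_i, E_j) > 0 is connected. Let s ∈ L ⊗ ℚ, s ≠ 0, satisfy (s, E_i) ≤ 0 for all i ∈ V. Then writing s = Σ_i s_i E_i, every coefficient s_i is strictly positive. -/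
lemma single_decomp {V : Type*} [Fintype V] [DecidableEq V] (y : V → ℚ) :
    y = ∑ j, y j • (Pi.single j 1 : V → ℚ) := by
  funext k
  simp [Finset.sum_apply, Pi.single_apply]

lemma expand_right {V : Type*} [Fintype V] [DecidableEq V]
    (B : (V → ℚ) →ₗ[ℚ] (V → ℚ) →ₗ[ℚ] ℚ) (x y : V → ℚ) :
    B x y = ∑ j, y j * B x (Pi.single j 1) := by
  conv_lhs => rw [single_decomp y]
  rw [map_sum]
  simp [smul_eq_mul]

theorem stmt_13 {V : Type*} [Fintype V] [DecidableEq V]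
    (B : (V → ℚ) →ₗ[ℚ] (V → ℚ) →ₗ[ℚ] ℚ)
    (hsym : ∀ x y, B x y = B y x)
    (hneg : ∀ x : V → ℚ, x ≠ 0 → B x x < 0)
    (hoff : ∀ i j : V, i ≠ j → 0 ≤ B (Pi.single i 1) (Pi.single j 1))
    (hconn : (SimpleGraph.fromRel fun i j =>
      0 < B (Pi.single i 1) (Pi.single j 1)).Connected)
    (s : V → ℚ) (hs : s ≠ 0) (hsE : ∀ i, B s (Pi.single i 1) ≤ 0) :
    ∀ i, 0 < s i := by
  set sp : V → ℚ := fun i => max (s i) 0 with hsp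
  set sm : V → ℚ := fun i => max (-(s i)) 0 with hsm
  have hsplit : s = sp - sm := by
    funext i
    simp only [hsp, hsm, Pi.sub_apply]
    rcases le_total (s i) 0 with h | h
    · rw [max_eq_right h, max_eq_left (by linarith)]; ring
    · rw [max_eq_left h, max_eq_right (by linarith)]; ring
  have hspn : ∀ i, 0 ≤ sp i := fun i => le_max_right _ _
  have hsmn : ∀ i, 0 ≤ sm i := fun i => le_max_right _ _
  have hprod : ∀ i, sp i * sm i = 0 := by
    intro i
    rcases le_total (s i) 0 with h | h
    · simp [hsp, max_eq_right h]
    · simp [hsm, max_eq_right (by linarith : -(s i) ≤ 0)]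
  -- B s sm ≤ 0
  have h1 : B s sm ≤ 0 := by
    rw [expand_right]
    apply Finset.sum_nonpos
    intro j _
    exact mul_nonpos_of_nonneg_of_nonpos (hsmn j) (hsE j)
  -- B sp sm ≥ 0
  have h2 : 0 ≤ B sp sm := by
    rw [expand_right]
    apply Finset.sum_nonneg
    intro j _
    rw [hsym, expand_right, Finset.mul_sum]
    apply Finset.sum_nonneg
    intro i _
    rcases eq_or_ne i j with rfl | hij
    · rcases mul_eq_zero.mp (hprod i) with h | h <;> simp [h]
    · exact mul_nonneg (hsmn j) (mul_nonneg (hspn i)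
        (by rw [hsym]; exact hoff i j hij))
  -- B sm sm ≥ 0
  have h3 : 0 ≤ B sm sm := by
    have : B sm sm = B sp sm - B s sm := by
      rw [hsplit]; simp [map_sub]
    linarith
  have hsm0 : sm = 0 := by
    by_contra h
    exact absurd h3 (not_le.mpr (hneg sm h))
  have hnn : ∀ i, 0 ≤ s i := by
    intro i
    have : sm i = 0 := by rw [hsm0]; rfl
    simp only [hsm] at this
    by_contra h
    push_neg at h
    rw [max_eq_left (by linarith)] at this
    linarith
  -- zero propagates to neighbors
  have hprop : ∀ i, s i = 0 → ∀ j,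
      (SimpleGraph.fromRel fun i j =>
        0 < B (Pi.single i 1) (Pi.single j 1)).Adj i j → s j = 0 := by
    intro i hi j hadj
    have hexp : B s (Pi.single i 1) = ∑ k, s k * B (Pi.single k 1) (Pi.single i 1) := by
      rw [hsym, expand_right]
      congr 1; funext k; rw [hsym]
    have hterm : ∀ k ∈ Finset.univ, 0 ≤ s k * B (Pi.single k 1) (Pi.single i 1) := by
      intro k _
      rcases eq_or_ne k i with rfl | hki
      · rw [hi]; simp
      · exact mul_nonneg (hnn k) (hoff k i hki)
    have hsum0 : ∑ k, s k * B (Pi.single k 1) (Pi.single i 1) = 0 :=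
      le_antisymm (hexp ▸ hsE i) (Finset.sum_nonneg hterm)
    have hzero := (Finset.sum_eq_zero_iff_of_nonneg hterm).mp hsum0 j (Finset.mem_univ j)
    obtain ⟨hne, hr⟩ := hadj
    have hBpos : 0 < B (Pi.single j 1) (Pi.single i 1) := by
      rcases hr with h | h
      · rwa [hsym]
      · exact h
    have := mul_eq_zero.mp hzero
    rcases this with h | h
    · exact h
    · exact absurd h (ne_of_gt hBpos)
  -- some j0 with s j0 > 0
  obtain ⟨j0, hj0⟩ : ∃ j0, s j0 ≠ 0 := by
    by_contra h
    push_neg at h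
    exact hs (funext h)
  have key : ∀ {a b : V},
      (SimpleGraph.fromRel fun i j =>
        0 < B (Pi.single i 1) (Pi.single j 1)).Walk a b → s b ≠ 0 → s a ≠ 0 := by
    intro a b w
    induction w with
    | nil => exact id
    | cons hadj p ih =>
      intro hb h0
      exact ih hb (hprop _ h0 _ hadj)
  intro i
  obtain ⟨w⟩ := hconn i j0
  exact lt_of_le_of_ne (hnn i) (Ne.symm (key w hj0))
end
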